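/- Let Σ ⊆ ℝ^d be a compact convex set containing 0, with intrinsic ball condition: there exist 0 < r ≤ R < ∞ such that B(0,r) ∩ aff(Σ) ⊆ Σ ⊆ B(0,R). Then for every boundary point x of Σ (relative to aff(Σ)) and every ε ∈ (0,1), the s-dimensional Hausdorff measure of B(x,ε) ∩ Σ is at least κ_s (min(r,1)/(2 max(R+r,1)))^s ε^s, where s = dim aff(Σ) and κ_s is the volume of the unit ball in ℝ^s. -/

import Mathlib

/-!
Put `δ = ε / (2 max(R + r, 1))` and `m = min(r, 1)`. The homothety of ratio `δ` centred at `x`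
maps `B(0, m) ∩ aff Σ ⊆ Σ` into `Σ` by convexity, and it moves points by at most
`δ (m + R) < ε`; so `B_{aff Σ}((1 - δ) x, δ m) ⊆ B(x, ε) ∩ Σ`. An isometric copy of the Euclidean
ball of radius `δ m` in `ℝ^s` has `s`-dimensional Hausdorff measure at least its volume
`κ_s (δ m)^s`, since on `ℝ^s` Lebesgue measure is dominated by `μH[s]`.
-/

open MeasureTheory

theorem EuclideanSpace.volume_le_hausdorffMeasure (ι : Type*) [Fintype ι] :
    (volume : Measure (EuclideanSpace ℝ ι)) ≤ μH[Fintype.card ι] := by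
  -- `volume t ≤ ediam t ^ card ι` holds for the sup metric, which is dominated by the `L²` one.
  refine Measure.le_hausdorffMeasure _ _ ⊤ ENNReal.zero_lt_top fun t _ => ?_
  have hvol : volume t = volume (WithLp.toLp 2 ⁻¹' t : Set (ι → ℝ)) :=
    ((PiLp.volume_preserving_toLp ι).measure_preimage_emb
      (MeasurableEquiv.toLp 2 (ι → ℝ)).measurableEmbedding t).symm
  have hdiam : Metric.ediam (WithLp.toLp 2 ⁻¹' t : Set (ι → ℝ)) ≤ Metric.ediam t := by
    have himage : WithLp.toLp 2 ⁻¹' t = WithLp.ofLp '' t :=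
      ((WithLp.equiv 2 (ι → ℝ)).image_eq_preimage_symm t).symm
    simpa [himage] using (PiLp.lipschitzWith_ofLp 2 fun _ : ι => ℝ).ediam_image_le t
  rw [hvol, ENNReal.rpow_natCast]
  exact (Real.volume_pi_le_diam_pow _).trans (pow_le_pow_left' hdiam _)

theorem Submodule.volume_ball_le_hausdorffMeasure_of_add_mem {E : Type*} [NormedAddCommGroup E]
    [InnerProductSpace ℝ E] [MeasurableSpace E] [BorelSpace E] (V : Submodule ℝ E)
    [FiniteDimensional ℝ V] {s : ℕ} (hs : Module.finrank ℝ V = s) (p : E) {ρ : ℝ} {A : Set E}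
    (hA : ∀ w ∈ V, ‖w‖ < ρ → p + w ∈ A) :
    volume (Metric.ball (0 : EuclideanSpace ℝ (Fin s)) ρ) ≤ μH[s] A := by
  let f : EuclideanSpace ℝ (Fin s) →ₗᵢ[ℝ] E :=
    V.subtypeₗᵢ.comp ((stdOrthonormalBasis ℝ V).reindex (finCongr hs)).repr.symm.toLinearIsometry
  have hg : Isometry fun w => p + f w := (IsometryEquiv.addLeft p).isometry.comp f.isometry
  calc volume (Metric.ball (0 : EuclideanSpace ℝ (Fin s)) ρ)
      ≤ μH[s] (Metric.ball (0 : EuclideanSpace ℝ (Fin s)) ρ) := by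
        simpa using EuclideanSpace.volume_le_hausdorffMeasure (Fin s) _
    _ = μH[s] ((fun w => p + f w) '' Metric.ball 0 ρ) :=
        (hg.hausdorffMeasure_image (Or.inl s.cast_nonneg) _).symm
    _ ≤ μH[s] A := by
        refine measure_mono (Set.image_subset_iff.2 fun w hw => hA _ (Subtype.prop _) ?_)
        simpa using hw

theorem Convex.one_sub_smul_add_mem {E : Type*} [NormedAddCommGroup E] [NormedSpace ℝ E]
    {S : Set E} (hS : Convex ℝ S) {V : Submodule ℝ E} {m : ℝ}
    (hball : Metric.ball 0 m ∩ V ⊆ S) {x : E} (hx : x ∈ S) {δ : ℝ} (hδ0 : 0 < δ) (hδ1 : δ ≤ 1)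
    {w : E} (hw : w ∈ V) (hwm : ‖w‖ < δ * m) : (1 - δ) • x + w ∈ S := by
  have hz : δ⁻¹ • w ∈ S := by
    refine hball ⟨?_, V.smul_mem _ hw⟩
    rw [mem_ball_zero_iff, norm_smul, Real.norm_of_nonneg (inv_nonneg.2 hδ0.le),
      inv_mul_lt_iff₀ hδ0]
    exact hwm
  simpa [smul_inv_smul₀ hδ0.ne'] using hS hx hz (by linarith) hδ0.le (by ring)

theorem dist_one_sub_smul_add_le {E : Type*} [NormedAddCommGroup E] [NormedSpace ℝ E]
    (x w : E) {δ : ℝ} (hδ : 0 ≤ δ) : dist ((1 - δ) • x + w) x ≤ ‖w‖ + δ * ‖x‖ := by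
  rw [dist_eq_norm, show (1 - δ) • x + w - x = w - δ • x by module]
  exact (norm_sub_le _ _).trans_eq (by rw [norm_smul, Real.norm_of_nonneg hδ])

theorem stmt_15_general {d : ℕ} (S : Set (EuclideanSpace ℝ (Fin d)))
    (hconv : Convex ℝ S)
    (h0 : (0 : EuclideanSpace ℝ (Fin d)) ∈ S)
    (r R : ℝ) (hr : 0 < r)
    (hball : Metric.ball (0 : EuclideanSpace ℝ (Fin d)) r ∩
      (affineSpan ℝ S : Set (EuclideanSpace ℝ (Fin d))) ⊆ S)
    (hbound : S ⊆ Metric.closedBall (0 : EuclideanSpace ℝ (Fin d)) R)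
    (x : EuclideanSpace ℝ (Fin d)) (hx : x ∈ S)
    (ε : ℝ) (hε0 : 0 < ε) (hε1 : ε < 1)
    (s : ℕ) (hs : s = Module.finrank ℝ (affineSpan ℝ S).direction) :
    volume (Metric.ball (0 : EuclideanSpace ℝ (Fin s)) 1) *
        ENNReal.ofReal ((min r 1 / (2 * max (R + r) 1)) ^ s * ε ^ s) ≤
      μH[(s : ℝ)] (Metric.ball x ε ∩ S) := by
  set V := (affineSpan ℝ S).direction
  set m := min r 1
  set M := max (R + r) 1
  set δ := ε / (2 * M) with hδ
  have hm0 : 0 < m := lt_min hr one_pos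
  have hM1 : 1 ≤ M := le_max_right _ _
  have hδ0 : 0 < δ := by positivity
  have hδM : δ * M = ε / 2 := by rw [hδ]; field_simp
  have hV : Metric.ball 0 m ∩ V ⊆ S := by
    rw [AffineSubspace.coe_direction_eq_vsub_set_right (subset_affineSpan ℝ S h0)]
    simpa using
      (Set.inter_subset_inter_left _ (Metric.ball_subset_ball (min_le_left r 1))).trans hball
  have hxR : ‖x‖ ≤ R := mem_closedBall_zero_iff.1 (hbound hx)
  have hsub : ∀ w ∈ V, ‖w‖ < δ * m → (1 - δ) • x + w ∈ Metric.ball x ε ∩ S := by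
    intro w hw hwm
    refine ⟨?_, hconv.one_sub_smul_add_mem hV hx hδ0 ?_ hw hwm⟩
    · calc dist ((1 - δ) • x + w) x ≤ ‖w‖ + δ * ‖x‖ := dist_one_sub_smul_add_le x w hδ0.le
        _ < δ * (m + R) := by nlinarith
        _ ≤ δ * M := by gcongr; linarith [min_le_left r 1, le_max_left (R + r) 1]
        _ < ε := by linarith
    · rw [div_le_one (by positivity)]; linarith
  calc volume (Metric.ball (0 : EuclideanSpace ℝ (Fin s)) 1) *
        ENNReal.ofReal ((m / (2 * M)) ^ s * ε ^ s)
      = ENNReal.ofReal ((δ * m) ^ s) * volume (Metric.ball (0 : EuclideanSpace ℝ (Fin s)) 1) := by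
        rw [mul_comm, hδ]
        ring_nf
    _ = volume (Metric.ball (0 : EuclideanSpace ℝ (Fin s)) (δ * m)) := by
        rw [Measure.addHaar_ball_of_pos _ _ (r := δ * m) (by positivity), finrank_euclideanSpace_fin]
    _ ≤ μH[(s : ℝ)] (Metric.ball x ε ∩ S) :=
        V.volume_ball_le_hausdorffMeasure_of_add_mem hs.symm _ hsub

theorem stmt_15 {d : ℕ} (S : Set (EuclideanSpace ℝ (Fin d)))
    (hS : IsCompact S) (hconv : Convex ℝ S)
    (h0 : (0 : EuclideanSpace ℝ (Fin d)) ∈ S)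
    (r R : ℝ) (hr : 0 < r) (hrR : r ≤ R)
    (hball : Metric.ball (0 : EuclideanSpace ℝ (Fin d)) r ∩
      (affineSpan ℝ S : Set (EuclideanSpace ℝ (Fin d))) ⊆ S)
    (hbound : S ⊆ Metric.closedBall (0 : EuclideanSpace ℝ (Fin d)) R)
    (x : EuclideanSpace ℝ (Fin d)) (hx : x ∈ S)
    (hxbdry : ∀ ε > 0, ¬ (Metric.ball x ε ∩
      (affineSpan ℝ S : Set (EuclideanSpace ℝ (Fin d))) ⊆ S))
    (ε : ℝ) (hε0 : 0 < ε) (hε1 : ε < 1)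
    (s : ℕ) (hs : s = Module.finrank ℝ (affineSpan ℝ S).direction) :
    volume (Metric.ball (0 : EuclideanSpace ℝ (Fin s)) 1) *
        ENNReal.ofReal ((min r 1 / (2 * max (R + r) 1)) ^ s * ε ^ s) ≤
      μH[(s : ℝ)] (Metric.ball x ε ∩ S) :=
  stmt_15_general S hconv h0 r R hr hball hbound x hx ε hε0 hε1 s hs
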